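/- arXiv:1705.04428 — 4 statements merged into one kernel-verified Lean document; each statement's English description precedes it below -/
import Mathlib

section
/- Let Ψ₁, Ψ₂ : ℝ → ℝ be continuous and T-periodic, with M̃ and Ṽ defined as the virtual mass and virtual potential. If M̃(T) ≠ 1, then for all x ∈ ℝ and all natural numbers k, Ṽ(x + kT) = M̃(T)ᵏ Ṽ(x) + Ṽ(T) · (M̃(T)ᵏ - 1)/(M̃(T) - 1). -/
open Real

/-- Virtual mass: `M̃(x) = exp(-2 ∫₀ˣ Ψ₂(τ) dτ)`. -/
noncomputable def vMass (Ψ₂ : ℝ → ℝ) (x : ℝ) : ℝ :=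
  Real.exp (-2 * ∫ τ in (0:ℝ)..x, Ψ₂ τ)

/-- Virtual potential: `Ṽ(x) = -∫₀ˣ Ψ₁(τ) M̃(τ) dτ`. -/
noncomputable def vPot (Ψ₁ Ψ₂ : ℝ → ℝ) (x : ℝ) : ℝ :=
  -∫ τ in (0:ℝ)..x, Ψ₁ τ * vMass Ψ₂ τ

lemma vMass_add (T : ℝ) (Ψ₂ : ℝ → ℝ) (hc₂ : Continuous Ψ₂)
    (hper₂ : ∀ x, Ψ₂ (x + T) = Ψ₂ x) (x : ℝ) :
    vMass Ψ₂ (x + T) = vMass Ψ₂ T * vMass Ψ₂ x := by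
  have hsplit : (∫ τ in (0:ℝ)..(x+T), Ψ₂ τ)
      = (∫ τ in (0:ℝ)..x, Ψ₂ τ) + ∫ τ in x..(x+T), Ψ₂ τ :=
    (intervalIntegral.integral_add_adjacent_intervals
      (hc₂.intervalIntegrable _ _) (hc₂.intervalIntegrable _ _)).symm
  have hper : Function.Periodic Ψ₂ T := hper₂
  have hpi : (∫ τ in x..(x+T), Ψ₂ τ) = ∫ τ in (0:ℝ)..(0+T), Ψ₂ τ :=
    hper.intervalIntegral_add_eq x 0
  simp only [vMass, hsplit, hpi, zero_add]
  rw [← Real.exp_add]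
  ring_nf

lemma vPot_add (T : ℝ) (Ψ₁ Ψ₂ : ℝ → ℝ)
    (hc₁ : Continuous Ψ₁) (hc₂ : Continuous Ψ₂)
    (hper₁ : ∀ x, Ψ₁ (x + T) = Ψ₁ x) (hper₂ : ∀ x, Ψ₂ (x + T) = Ψ₂ x) (x : ℝ) :
    vPot Ψ₁ Ψ₂ (x + T) = vPot Ψ₁ Ψ₂ T + vMass Ψ₂ T * vPot Ψ₁ Ψ₂ x := by
  have hcM : Continuous (vMass Ψ₂) := by
    apply Real.continuous_exp.comp
    exact continuous_const.mul (intervalIntegral.continuous_primitive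
      (fun a b => hc₂.intervalIntegrable a b) 0)
  have hcf : Continuous (fun τ => Ψ₁ τ * vMass Ψ₂ τ) := hc₁.mul hcM
  have hsplit : (∫ τ in (0:ℝ)..(x+T), Ψ₁ τ * vMass Ψ₂ τ)
      = (∫ τ in (0:ℝ)..T, Ψ₁ τ * vMass Ψ₂ τ) + ∫ τ in T..(x+T), Ψ₁ τ * vMass Ψ₂ τ :=
    (intervalIntegral.integral_add_adjacent_intervals
      (hcf.intervalIntegrable _ _) (hcf.intervalIntegrable _ _)).symm
  have hshift : (∫ τ in T..(x+T), Ψ₁ τ * vMass Ψ₂ τ)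
      = ∫ τ in (0:ℝ)..x, Ψ₁ (τ+T) * vMass Ψ₂ (τ+T) := by
    rw [intervalIntegral.integral_comp_add_right (fun τ => Ψ₁ τ * vMass Ψ₂ τ) T]
    norm_num
  have hval : (∫ τ in (0:ℝ)..x, Ψ₁ (τ+T) * vMass Ψ₂ (τ+T))
      = vMass Ψ₂ T * ∫ τ in (0:ℝ)..x, Ψ₁ τ * vMass Ψ₂ τ := by
    rw [← intervalIntegral.integral_const_mul]
    congr 1
    ext τ
    rw [hper₁, vMass_add T Ψ₂ hc₂ hper₂]
    ring
  simp only [vPot, hsplit, hshift, hval]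
  ring

theorem vPot_add_nat_mul_period (T : ℝ) (hT : 0 < T) (Ψ₁ Ψ₂ : ℝ → ℝ)
    (hc₁ : Continuous Ψ₁) (hc₂ : Continuous Ψ₂)
    (hper₁ : ∀ x, Ψ₁ (x + T) = Ψ₁ x) (hper₂ : ∀ x, Ψ₂ (x + T) = Ψ₂ x)
    (hM : vMass Ψ₂ T ≠ 1) (x : ℝ) (k : ℕ) :
    vPot Ψ₁ Ψ₂ (x + k * T) =
      vMass Ψ₂ T ^ k * vPot Ψ₁ Ψ₂ x +
        vPot Ψ₁ Ψ₂ T * (vMass Ψ₂ T ^ k - 1) / (vMass Ψ₂ T - 1) := by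
  have hM1 : vMass Ψ₂ T - 1 ≠ 0 := sub_ne_zero.mpr hM
  induction k with
  | zero => simp
  | succ k ih =>
    have : x + (k+1 : ℕ) * T = (x + k * T) + T := by push_cast; ring
    rw [this, vPot_add T Ψ₁ Ψ₂ hc₁ hc₂ hper₁ hper₂, ih]
    field_simp
    ring
end

section
/- Let Ψ₁, Ψ₂ : ℝ → ℝ be smooth, and define L(x, ẋ) = (1/2) M̃(x) ẋ² - Ṽ(x), where M̃ and Ṽ are the virtual mass and virtual potential. Then along any C² curve x(t), the Euler-Lagrange expression satisfies (d/dt)(∂L/∂ẋ)(x(t), ẋ(t)) - (∂L/∂x)(x(t), ẋ(t)) = M̃(x(t)) · (ẍ(t) - Ψ₁(x(t)) - Ψ₂(x(t)) ẋ(t)²). -/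
open Real

/-- Energy: `Ẽ₀(x, ẋ) = (1/2) M̃(x) ẋ² + Ṽ(x)`. -/
noncomputable def energy (Ψ₁ Ψ₂ : ℝ → ℝ) (x v : ℝ) : ℝ :=
  (1/2) * vMass Ψ₂ x * v ^ 2 + vPot Ψ₁ Ψ₂ x

lemma hasDerivAt_integral_of_continuous {f : ℝ → ℝ} (h : Continuous f) (y : ℝ) :
    HasDerivAt (fun z => ∫ τ in (0:ℝ)..z, f τ) (f y) y :=
  intervalIntegral.integral_hasDerivAt_right (h.intervalIntegrable 0 y)
    (h.stronglyMeasurableAtFilter _ _) h.continuousAt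

lemma hasDerivAt_vMass (Ψ₂ : ℝ → ℝ) (h : Continuous Ψ₂) (y : ℝ) :
    HasDerivAt (vMass Ψ₂) (-2 * Ψ₂ y * vMass Ψ₂ y) y := by
  have hI := (hasDerivAt_integral_of_continuous h y).const_mul (-2 : ℝ)
  have := hI.exp
  unfold vMass
  convert this using 1
  ring

lemma continuous_vMass (Ψ₂ : ℝ → ℝ) (h : Continuous Ψ₂) : Continuous (vMass Ψ₂) := by
  have : Continuous fun z => ∫ τ in (0:ℝ)..z, Ψ₂ τ := by
    refine continuous_iff_continuousAt.2 fun y => (hasDerivAt_integral_of_continuous h y).continuousAt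
  exact Real.continuous_exp.comp (continuous_const.mul this)

lemma hasDerivAt_vPot (Ψ₁ Ψ₂ : ℝ → ℝ) (h₁ : Continuous Ψ₁) (h₂ : Continuous Ψ₂) (y : ℝ) :
    HasDerivAt (vPot Ψ₁ Ψ₂) (-(Ψ₁ y * vMass Ψ₂ y)) y := by
  have := (hasDerivAt_integral_of_continuous (h₁.mul (continuous_vMass Ψ₂ h₂)) y).neg
  exact this

theorem euler_lagrange_expression (Ψ₁ Ψ₂ : ℝ → ℝ)
    (hs₁ : ContDiff ℝ (⊤ : ℕ∞) Ψ₁) (hs₂ : ContDiff ℝ (⊤ : ℕ∞) Ψ₂)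
    (a b : ℝ) (x x' x'' : ℝ → ℝ)
    (hx : ∀ t ∈ Set.Ioo a b, HasDerivAt x (x' t) t)
    (hx' : ∀ t ∈ Set.Ioo a b, HasDerivAt x' (x'' t) t) :
    ∀ t ∈ Set.Ioo a b,
      deriv (fun τ => vMass Ψ₂ (x τ) * x' τ) t -
        ((1/2) * deriv (vMass Ψ₂) (x t) * (x' t) ^ 2 - deriv (vPot Ψ₁ Ψ₂) (x t)) =
      vMass Ψ₂ (x t) * (x'' t - Ψ₁ (x t) - Ψ₂ (x t) * (x' t) ^ 2) := by
  intro t ht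
  have hM := hasDerivAt_vMass Ψ₂ hs₂.continuous (x t)
  have hV := hasDerivAt_vPot Ψ₁ Ψ₂ hs₁.continuous hs₂.continuous (x t)
  have hcomp : HasDerivAt (fun τ => vMass Ψ₂ (x τ) * x' τ)
      ((-2 * Ψ₂ (x t) * vMass Ψ₂ (x t) * x' t) * x' t + vMass Ψ₂ (x t) * x'' t) t :=
    ((hM.comp t (hx t ht)).mul (hx' t ht))
  rw [hcomp.deriv, hM.deriv, hV.deriv]
  ring
end

section
/- Let f₀ ≠ 0 be real and suppose Ψ₁, Ψ₂ : ℝ → ℝ are smooth with virtual mass M̃ and virtual potential Ṽ. Define L̃(x, ẋ) = -sin(2πf₀Ẽ₀(x,ẋ)) + √(2f₀M̃(x)) · πẋ · [cos(2πf₀Ṽ(x)) C(√(2f₀M̃(x)) ẋ) - sin(2πf₀Ṽ(x)) S(√(2f₀M̃(x)) ẋ)], where C, S are the Fresnel cosine and sine integrals and Ẽ₀(x,ẋ) = (1/2)M̃(x)ẋ² + Ṽ(x). Then ∂²L̃/∂ẋ²(x, ẋ) = 2πf₀ M̃(x) cos(2πf₀ Ẽ₀(x, ẋ)). -/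
open Real

/-- Fresnel cosine integral `C(x) = ∫₀ˣ cos(πt²/2) dt`. -/
noncomputable def fresnelC (x : ℝ) : ℝ := ∫ t in (0:ℝ)..x, Real.cos (π * t ^ 2 / 2)

/-- Fresnel sine integral `S(x) = ∫₀ˣ sin(πt²/2) dt`. -/
noncomputable def fresnelS (x : ℝ) : ℝ := ∫ t in (0:ℝ)..x, Real.sin (π * t ^ 2 / 2)


lemma fresnelC_hasDerivAt (y : ℝ) : HasDerivAt fresnelC (Real.cos (π * y ^ 2 / 2)) y := by
  have hc : Continuous fun t : ℝ => Real.cos (π * t ^ 2 / 2) := by continuity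
  exact intervalIntegral.integral_hasDerivAt_right (hc.intervalIntegrable _ _)
    (hc.stronglyMeasurableAtFilter _ _) hc.continuousAt

lemma fresnelS_hasDerivAt (y : ℝ) : HasDerivAt fresnelS (Real.sin (π * y ^ 2 / 2)) y := by
  have hc : Continuous fun t : ℝ => Real.sin (π * t ^ 2 / 2) := by continuity
  exact intervalIntegral.integral_hasDerivAt_right (hc.intervalIntegrable _ _)
    (hc.stronglyMeasurableAtFilter _ _) hc.continuousAt

/-- The degenerate Lagrangian of Theorem 3 (formula (6)). -/
noncomputable def sLagrangian (Ψ₁ Ψ₂ : ℝ → ℝ) (f₀ x v : ℝ) : ℝ :=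
  -Real.sin (2 * π * f₀ * energy Ψ₁ Ψ₂ x v) +
    Real.sqrt (2 * f₀ * vMass Ψ₂ x) * π * v *
      (Real.cos (2 * π * f₀ * vPot Ψ₁ Ψ₂ x) *
          fresnelC (Real.sqrt (2 * f₀ * vMass Ψ₂ x) * v) -
        Real.sin (2 * π * f₀ * vPot Ψ₁ Ψ₂ x) *
          fresnelS (Real.sqrt (2 * f₀ * vMass Ψ₂ x) * v))

theorem second_partial_of_sLagrangian (f₀ : ℝ) (hf₀ : 0 < f₀) (Ψ₁ Ψ₂ : ℝ → ℝ)
    (hs₁ : ContDiff ℝ (⊤ : ℕ∞) Ψ₁) (hs₂ : ContDiff ℝ (⊤ : ℕ∞) Ψ₂) :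
    ∀ x v : ℝ,
      deriv (fun w => deriv (fun u => sLagrangian Ψ₁ Ψ₂ f₀ x u) w) v =
        2 * π * f₀ * vMass Ψ₂ x * Real.cos (2 * π * f₀ * energy Ψ₁ Ψ₂ x v) := by
  intro x v
  have hmpos : (0:ℝ) < vMass Ψ₂ x := Real.exp_pos _
  set m := vMass Ψ₂ x with hm
  set p := vPot Ψ₁ Ψ₂ x with hp
  set a := Real.sqrt (2 * f₀ * m) with ha
  have ha2 : a ^ 2 = 2 * f₀ * m := Real.sq_sqrt (by positivity)
  have key : ∀ u : ℝ,
      Real.cos (2 * π * f₀ * p) * Real.cos (π * (a * u) ^ 2 / 2)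
        - Real.sin (2 * π * f₀ * p) * Real.sin (π * (a * u) ^ 2 / 2)
      = Real.cos (2 * π * f₀ * energy Ψ₁ Ψ₂ x u) := by
    intro u
    rw [← Real.cos_add]
    congr 1
    have h : (a * u) ^ 2 = 2 * f₀ * m * u ^ 2 := by rw [mul_pow, ha2]
    simp only [energy, ← hm, ← hp]
    rw [h]; ring
  have hF : ∀ w : ℝ, HasDerivAt
      (fun u => Real.cos (2 * π * f₀ * p) * fresnelC (a * u)
        - Real.sin (2 * π * f₀ * p) * fresnelS (a * u))
      (a * Real.cos (2 * π * f₀ * energy Ψ₁ Ψ₂ x w)) w := by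
    intro w
    have hlin : HasDerivAt (fun u : ℝ => a * u) a w := by
      simpa using (hasDerivAt_id w).const_mul a
    have hC : HasDerivAt (fun u : ℝ => fresnelC (a * u))
        (Real.cos (π * (a * w) ^ 2 / 2) * a) w :=
      (fresnelC_hasDerivAt (a * w)).comp w hlin
    have hS : HasDerivAt (fun u : ℝ => fresnelS (a * u))
        (Real.sin (π * (a * w) ^ 2 / 2) * a) w :=
      (fresnelS_hasDerivAt (a * w)).comp w hlin
    have := (hC.const_mul (Real.cos (2 * π * f₀ * p))).sub
      (hS.const_mul (Real.sin (2 * π * f₀ * p)))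
    refine this.congr_deriv ?_
    rw [← key w]; ring
  have hG : ∀ w : ℝ, HasDerivAt (fun u => sLagrangian Ψ₁ Ψ₂ f₀ x u)
      (a * π * (Real.cos (2 * π * f₀ * p) * fresnelC (a * w)
        - Real.sin (2 * π * f₀ * p) * fresnelS (a * w))) w := by
    intro w
    have hE : HasDerivAt (fun u => 2 * π * f₀ * energy Ψ₁ Ψ₂ x u)
        (2 * π * f₀ * (m * w)) w := by
      have h0 : HasDerivAt (fun u : ℝ => 2 * π * f₀ * ((1/2) * m * u ^ 2 + p))
          (2 * π * f₀ * (m * w)) w := by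
        have := (((hasDerivAt_pow 2 w).const_mul ((1/2) * m)).add_const p).const_mul
          (2 * π * f₀)
        refine this.congr_deriv ?_
        norm_num
        left; ring
      have heq : (fun u : ℝ => 2 * π * f₀ * energy Ψ₁ Ψ₂ x u)
          = fun u : ℝ => 2 * π * f₀ * ((1/2) * m * u ^ 2 + p) := by
        funext u; simp only [energy, ← hm, ← hp]
      rw [heq]; exact h0
    have hsin : HasDerivAt (fun u : ℝ => -Real.sin (2 * π * f₀ * energy Ψ₁ Ψ₂ x u))
        (-(Real.cos (2 * π * f₀ * energy Ψ₁ Ψ₂ x w) * (2 * π * f₀ * (m * w)))) w :=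
      ((Real.hasDerivAt_sin _).comp w hE).neg
    have hlin2 : HasDerivAt (fun u : ℝ => a * π * u) (a * π) w := by
      simpa using (hasDerivAt_id w).const_mul (a * π)
    have hprod := hlin2.mul (hF w)
    have htot := hsin.add hprod
    have heq2 : (fun u => sLagrangian Ψ₁ Ψ₂ f₀ x u)
        = fun u : ℝ => -Real.sin (2 * π * f₀ * energy Ψ₁ Ψ₂ x u)
            + a * π * u * (Real.cos (2 * π * f₀ * p) * fresnelC (a * u)
              - Real.sin (2 * π * f₀ * p) * fresnelS (a * u)) := by
      funext u; simp only [sLagrangian, ← hm, ← hp, ← ha]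
    rw [heq2]
    refine htot.congr_deriv ?_
    linear_combination π * w * Real.cos (2 * π * f₀ * energy Ψ₁ Ψ₂ x w) * ha2
  have hderiv : (fun w => deriv (fun u => sLagrangian Ψ₁ Ψ₂ f₀ x u) w)
      = fun w => a * π * (Real.cos (2 * π * f₀ * p) * fresnelC (a * w)
        - Real.sin (2 * π * f₀ * p) * fresnelS (a * w)) := by
    funext w; exact (hG w).deriv
  rw [hderiv, HasDerivAt.deriv ((hF v).const_mul (a * π))]
  linear_combination π * Real.cos (2 * π * f₀ * energy Ψ₁ Ψ₂ x v) * ha2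
end

section
/- Let Ψ₁, Ψ₂ : ℝ → ℝ be continuous and T-periodic with sgn(Ψ₁) constant and nonzero (say Ψ₁ > 0) and ∫₀ᵀ Ψ₂(τ)dτ < 0 (so M̃(T) > 1). Then the function ν̃(x) = √( -2 M̃(x)⁻¹ (Ṽ(x+T) - Ṽ(x)) / (M̃(T) - 1) ) is well-defined (the quantity under the square root is positive) and T-periodic: ν̃(x + T) = ν̃(x) for all x ∈ ℝ. -/
open Real

/-- The limit-cycle profile `ν̃(x) = √(-2 M̃(x)⁻¹ (Ṽ(x+T) - Ṽ(x)) / (M̃(T) - 1))`. -/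
noncomputable def nuTilde (Ψ₁ Ψ₂ : ℝ → ℝ) (T x : ℝ) : ℝ :=
  Real.sqrt (-2 * (vMass Ψ₂ x)⁻¹ *
    (vPot Ψ₁ Ψ₂ (x + T) - vPot Ψ₁ Ψ₂ x) / (vMass Ψ₂ T - 1))

lemma vMass_pos (Ψ₂ : ℝ → ℝ) (x : ℝ) : 0 < vMass Ψ₂ x := Real.exp_pos _

lemma vMass_cont (Ψ₂ : ℝ → ℝ) (hc₂ : Continuous Ψ₂) : Continuous (vMass Ψ₂) := by
  have h : Continuous fun x : ℝ => ∫ τ in (0:ℝ)..x, Ψ₂ τ :=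
    intervalIntegral.continuous_primitive (fun a b => hc₂.intervalIntegrable a b) 0
  exact (continuous_const.mul h).rexp

lemma vPot_diff (T : ℝ) (Ψ₁ Ψ₂ : ℝ → ℝ) (hc : Continuous fun τ => Ψ₁ τ * vMass Ψ₂ τ) (x : ℝ) :
    vPot Ψ₁ Ψ₂ (x + T) - vPot Ψ₁ Ψ₂ x = -∫ τ in x..(x + T), Ψ₁ τ * vMass Ψ₂ τ := by
  have h : (∫ τ in (0:ℝ)..(x + T), Ψ₁ τ * vMass Ψ₂ τ)
      = (∫ τ in (0:ℝ)..x, Ψ₁ τ * vMass Ψ₂ τ) + ∫ τ in x..(x + T), Ψ₁ τ * vMass Ψ₂ τ :=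
    (intervalIntegral.integral_add_adjacent_intervals (hc.intervalIntegrable _ _)
      (hc.intervalIntegrable _ _)).symm
  rw [vPot, vPot, h]; ring

theorem nuTilde_well_defined_and_periodic (T : ℝ) (hT : 0 < T) (Ψ₁ Ψ₂ : ℝ → ℝ)
    (hc₁ : Continuous Ψ₁) (hc₂ : Continuous Ψ₂)
    (hper₁ : ∀ x, Ψ₁ (x + T) = Ψ₁ x) (hper₂ : ∀ x, Ψ₂ (x + T) = Ψ₂ x)
    (hΨ₁pos : ∀ x, 0 < Ψ₁ x) (hint : (∫ τ in (0:ℝ)..T, Ψ₂ τ) < 0) :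
    (∀ x : ℝ, 0 < -2 * (vMass Ψ₂ x)⁻¹ *
      (vPot Ψ₁ Ψ₂ (x + T) - vPot Ψ₁ Ψ₂ x) / (vMass Ψ₂ T - 1)) ∧
    (∀ x : ℝ, nuTilde Ψ₁ Ψ₂ T (x + T) = nuTilde Ψ₁ Ψ₂ T x) := by
  have hc : Continuous fun τ => Ψ₁ τ * vMass Ψ₂ τ := hc₁.mul (vMass_cont Ψ₂ hc₂)
  have hMT : 1 < vMass Ψ₂ T := by
    rw [vMass, ← Real.exp_zero]
    exact Real.exp_lt_exp.mpr (by nlinarith)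
  have hMT1 : (0:ℝ) < vMass Ψ₂ T - 1 := by linarith
  have hdiff : ∀ x : ℝ, vPot Ψ₁ Ψ₂ (x + T) - vPot Ψ₁ Ψ₂ x < 0 := by
    intro x
    rw [vPot_diff T Ψ₁ Ψ₂ hc x]
    have : 0 < ∫ τ in x..(x + T), Ψ₁ τ * vMass Ψ₂ τ := by
      apply intervalIntegral.intervalIntegral_pos_of_pos (hc.intervalIntegrable _ _)
        (fun τ => mul_pos (hΨ₁pos τ) (vMass_pos Ψ₂ τ)) (by linarith)
    linarith
  have hpos : ∀ x : ℝ, 0 < -2 * (vMass Ψ₂ x)⁻¹ *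
      (vPot Ψ₁ Ψ₂ (x + T) - vPot Ψ₁ Ψ₂ x) / (vMass Ψ₂ T - 1) := by
    intro x
    apply div_pos _ hMT1
    have := vMass_pos Ψ₂ x
    have := hdiff x
    have : 0 < (vMass Ψ₂ x)⁻¹ := inv_pos.mpr (vMass_pos Ψ₂ x)
    nlinarith [hdiff x]
  refine ⟨hpos, fun x => ?_⟩
  have hDshift : vPot Ψ₁ Ψ₂ (x + T + T) - vPot Ψ₁ Ψ₂ (x + T)
      = vMass Ψ₂ T * (vPot Ψ₁ Ψ₂ (x + T) - vPot Ψ₁ Ψ₂ x) := by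
    rw [vPot_diff T Ψ₁ Ψ₂ hc (x + T), vPot_diff T Ψ₁ Ψ₂ hc x]
    have h2 : (∫ τ in (x + T)..(x + T + T), Ψ₁ τ * vMass Ψ₂ τ)
        = ∫ τ in x..(x + T), Ψ₁ (τ + T) * vMass Ψ₂ (τ + T) := by
      rw [intervalIntegral.integral_comp_add_right (fun τ => Ψ₁ τ * vMass Ψ₂ τ) T]
    rw [h2]
    have h3 : (∫ τ in x..(x + T), Ψ₁ (τ + T) * vMass Ψ₂ (τ + T))
        = ∫ τ in x..(x + T), vMass Ψ₂ T * (Ψ₁ τ * vMass Ψ₂ τ) := by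
      congr 1; ext τ
      rw [hper₁, vMass_add T Ψ₂ hc₂ hper₂]; ring
    rw [h3, intervalIntegral.integral_const_mul]; ring
  unfold nuTilde
  congr 1
  rw [hDshift, vMass_add T Ψ₂ hc₂ hper₂]
  have h0 : vMass Ψ₂ T ≠ 0 := ne_of_gt (vMass_pos Ψ₂ T)
  have h0' : vMass Ψ₂ x ≠ 0 := ne_of_gt (vMass_pos Ψ₂ x)
  field_simp
end
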